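/- arXiv:2510.25131 — 6 statements merged into one kernel-verified Lean document; each statement's English description precedes it below -/
import Mathlib

section
/- Let T > 0 and let Φ(s) = Σ_{k=1}^K β_k · exp(−m_k·T·s) be a finite sum of delayed exponentials, where K ≥ 1, the β_k are real numbers not all zero, and the m_k are distinct positive integers. Then for every real g ≥ 0 and every complex s with Re s > g, one has |Φ(s)| < sup { |Φ(w)| : w ∈ ℂ, Re w = g }. -/
/-!
Substituting `z = exp (-T w)` turns `Φ` into the polynomial `p z = ∑ β_k z ^ m_k`, and maps the
line `Re w = g` onto the circle `‖z‖ = exp (-T g)` and the half-plane `Re w > g` into the open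
disc it bounds. Since the `m_k` are distinct and positive, `p` is a nonconstant polynomial, so by
the strict maximum modulus principle `‖p‖` inside the disc stays below its maximum on the circle,
and that maximum is the supremum of `‖Φ‖` on the line.
-/

open Complex Function Metric Polynomial Set

theorem Complex.norm_lt_of_mem_ball_of_forall_sphere_le {F : Type*} [NormedAddCommGroup F]
    [NormedSpace ℂ F] [StrictConvexSpace ℝ F] {f : ℂ → F} {c z : ℂ} {r C : ℝ}
    (hf : DiffContOnCl ℂ f (ball c r)) (hC : ∀ w ∈ sphere c r, ‖f w‖ ≤ C) (hz : z ∈ ball c r)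
    (hnc : ¬ EqOn f (const ℂ (f z)) (ball c r)) : ‖f z‖ < C := by
  have hr : r ≠ 0 := (pos_of_mem_ball hz).ne'
  refine lt_of_not_ge fun hCz => hnc ?_
  have hmax : IsMaxOn (norm ∘ f) (ball c r) z := fun w hw =>
    (norm_le_of_forall_mem_frontier_norm_le isBounded_ball hf (by rwa [frontier_ball c hr])
      (subset_closure hw)).trans hCz
  exact eqOn_of_isPreconnected_of_isMaxOn_norm (convex_ball c r).isPreconnected isOpen_ball
    hf.differentiableOn hz hmax

theorem Polynomial.not_eqOn_const_of_degree_pos {R : Type*} [CommRing R] [IsDomain R]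
    {p : R[X]} (hp : 0 < p.degree) {s : Set R} (hs : s.Infinite) (a : R) :
    ¬ EqOn p.eval (const R a) s := fun h => by
  have hpC : p = C a := eq_of_infinite_eval_eq p (C a) (hs.mono fun x hx => by simpa using h hx)
  exact (degree_C_le.trans_lt (hpC ▸ hp)).false

theorem Complex.norm_exp_neg_ofReal_mul (T : ℝ) (w : ℂ) :
    ‖exp (-(T * w))‖ = Real.exp (-(T * w.re)) := by
  simp [Complex.norm_exp]

theorem Complex.exists_re_eq_exp_neg_ofReal_mul_eq {T : ℝ} (hT : T ≠ 0) (g : ℝ) {ζ : ℂ}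
    (hζ : ‖ζ‖ = Real.exp (-(T * g))) : ∃ w : ℂ, w.re = g ∧ exp (-(T * w)) = ζ := by
  have hζ0 : ζ ≠ 0 := norm_pos_iff.1 (hζ ▸ Real.exp_pos _)
  have hT' : (T : ℂ) ≠ 0 := ofReal_ne_zero.2 hT
  refine ⟨-log ζ / T, ?_, ?_⟩
  · rw [div_ofReal_re, neg_re, log_re, hζ, Real.log_exp]
    field_simp
  · rw [mul_div_cancel₀ _ hT', neg_neg, exp_log hζ0]

noncomputable def delayPoly {ι : Type*} [Fintype ι] (β : ι → ℝ) (m : ι → ℕ) : ℂ[X] :=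
  ∑ k, C (β k : ℂ) * X ^ m k

section delayPoly

variable {ι : Type*} [Fintype ι]

theorem eval_exp_delayPoly (β : ι → ℝ) (m : ι → ℕ) (T : ℝ) (w : ℂ) :
    (delayPoly β m).eval (exp (-(T * w))) = ∑ k, (β k : ℂ) * exp (-(m k * T * w)) := by
  simp only [delayPoly, eval_finsetSum, eval_mul, eval_C, eval_pow, eval_X, ← Complex.exp_nat_mul]
  congr! 3
  ring

theorem coeff_delayPoly_of_injective (β : ι → ℝ) {m : ι → ℕ} (hm : Injective m) (k : ι) :
    (delayPoly β m).coeff (m k) = β k := by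
  classical
  simp [delayPoly, coeff_C_mul, coeff_X_pow, hm.eq_iff]

theorem degree_delayPoly_pos {m : ι → ℕ} (hm : ∀ k, 0 < m k) (hm_inj : Injective m)
    {β : ι → ℝ} (hβ : ∃ k, β k ≠ 0) : 0 < (delayPoly β m).degree := by
  obtain ⟨k, hk⟩ := hβ
  refine lt_of_lt_of_le ?_ (le_degree_of_ne_zero (n := m k) ?_)
  · exact_mod_cast hm k
  · rwa [coeff_delayPoly_of_injective β hm_inj, ofReal_ne_zero]

end delayPoly

theorem stmt0_general
    (T : ℝ) (hT : 0 < T)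
    (K : ℕ)
    (β : Fin K → ℝ) (hβ : ∃ k, β k ≠ 0)
    (m : Fin K → ℕ) (hm : ∀ k, 0 < m k) (hm_inj : Function.Injective m)
    (Φ : ℂ → ℂ)
    (hΦ : ∀ s : ℂ, Φ s = ∑ k : Fin K, (β k : ℂ) * Complex.exp (-((m k : ℂ) * (T : ℂ) * s)))
    (g : ℝ)
    (s : ℂ) (hs : g < s.re) :
    ‖Φ s‖ < sSup {x : ℝ | ∃ w : ℂ, w.re = g ∧ x = ‖Φ w‖} := by
  set p := delayPoly β m
  have hΦp : ∀ w, Φ w = p.eval (exp (-(T * w))) := fun w => by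
    rw [hΦ, eval_exp_delayPoly]
  have hpd : Differentiable ℂ p.eval := p.differentiable
  set r := Real.exp (-(T * g))
  obtain ⟨ζ, hζ, hζmax⟩ := (isCompact_sphere (0 : ℂ) r).exists_isMaxOn
    (NormedSpace.sphere_nonempty.2 (Real.exp_pos _).le) hpd.continuous.norm.continuousOn
  obtain ⟨w₀, hw₀, rfl⟩ :=
    exists_re_eq_exp_neg_ofReal_mul_eq hT.ne' g (mem_sphere_zero_iff_norm.1 hζ)
  have hsup : sSup {x : ℝ | ∃ w : ℂ, w.re = g ∧ x = ‖Φ w‖} = ‖Φ w₀‖ := by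
    refine IsGreatest.csSup_eq ⟨⟨w₀, hw₀, rfl⟩, ?_⟩
    rintro _ ⟨w, hw, rfl⟩
    rw [hΦp, hΦp]
    exact hζmax (mem_sphere_zero_iff_norm.2 (by rw [norm_exp_neg_ofReal_mul, hw]))
  have hs_ball : exp (-(T * s)) ∈ ball (0 : ℂ) r := by
    rw [mem_ball_zero_iff, norm_exp_neg_ofReal_mul]
    exact Real.exp_lt_exp.2 (by nlinarith)
  rw [hsup, hΦp, hΦp]
  exact Complex.norm_lt_of_mem_ball_of_forall_sphere_le hpd.diffContOnCl hζmax
    hs_ball (p.not_eqOn_const_of_degree_pos (degree_delayPoly_pos hm hm_inj hβ)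
      (infinite_of_mem_nhds _ (isOpen_ball.mem_nhds hs_ball)) _)

/-- For `Φ(s) = Σ_{k=1}^K β_k exp(-m_k T s)` with real `β_k` not all zero and
distinct positive integers `m_k`, for every `g ≥ 0` and every `s` with `Re s > g`,
`|Φ(s)| < sup { |Φ(w)| : Re w = g }`. -/
theorem stmt0
    (T : ℝ) (hT : 0 < T)
    (K : ℕ) (hK : 1 ≤ K)
    (β : Fin K → ℝ) (hβ : ∃ k, β k ≠ 0)
    (m : Fin K → ℕ) (hm : ∀ k, 0 < m k) (hm_inj : Function.Injective m)
    (Φ : ℂ → ℂ)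
    (hΦ : ∀ s : ℂ, Φ s = ∑ k : Fin K, (β k : ℂ) * Complex.exp (-((m k : ℂ) * (T : ℂ) * s)))
    (g : ℝ) (hg : 0 ≤ g)
    (s : ℂ) (hs : g < s.re) :
    ‖Φ s‖ < sSup {x : ℝ | ∃ w : ℂ, w.re = g ∧ x = ‖Φ w‖} :=
  stmt0_general T hT K β hβ m hm hm_inj Φ hΦ g s hs
end

section
/- Let T > 0 and let Φ(s) = Σ_{k=1}^K β_k · exp(−m_k·T·s) with real β_k not all zero and distinct positive integers m_k, and assume |Φ(iω)| ≤ 1 for every real ω. Let ω_b, ω_c, L > 0 and Γ(s) = (ω_c·L/2)·((1+Φ(s))/(1−Φ(s)))·(ω_b/(s+ω_b)). Then 1 + Γ(s) ≠ 0 for every complex s with Re s > 0; consequently the sensitivity function S(s) = 1/(1+Γ(s)) is well defined (and has no zeros) on the open right half-plane. -/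
open Complex Real Filter Set

/-!
With `z = exp (-T s)` the delay sum is `Φ s = z · g z` for the polynomial
`g z = ∑ β_k z ^ (m_k - 1)`. Every point of the unit circle is `exp (-T iω)` for some real `ω`,
so the bound `‖Φ (iω)‖ ≤ 1` says `‖g‖ ≤ 1` on the unit circle, hence on the unit disk by the
maximum modulus principle. For `Re s > 0` we have `‖z‖ < 1`, so `‖Φ s‖ < 1`. Then
`(1 + Φ s) / (1 - Φ s)` and `ω_b / (s + ω_b)` both have positive real part, and a product of
two numbers in the open right half-plane is never `-1`.
-/

namespace Complex

theorem re_inv_pos {z : ℂ} (hz : 0 < z.re) : 0 < z⁻¹.re := by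
  rw [inv_re]
  exact div_pos hz (normSq_pos.mpr fun h => by simp [h] at hz)

theorem one_add_mul_ne_zero_of_re_pos {a b : ℂ} (ha : 0 < a.re) (hb : 0 < b.re) :
    1 + a * b ≠ 0 := by
  intro h
  have ha0 : a ≠ 0 := fun h0 => by simp [h0] at ha
  have hb_eq : b = -a⁻¹ := by
    field_simp
    linear_combination h
  have : b.re < 0 := by
    rw [hb_eq, neg_re]
    exact neg_neg_of_pos (re_inv_pos ha)
  linarith

theorem re_one_add_div_one_sub_pos {w : ℂ} (hw : ‖w‖ < 1) : 0 < ((1 + w) / (1 - w)).re := by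
  have hw1 : 1 - w ≠ 0 := fun h => by
    simp [← sub_eq_zero.mp h] at hw
  have hnormSq : normSq w < 1 := by
    rw [normSq_eq_norm_sq]
    nlinarith [norm_nonneg w]
  rw [div_re]
  simp only [add_re, one_re, sub_re, add_im, one_im, sub_im]
  rw [← add_div]
  -- the numerator is `1 - ‖w‖²`
  apply div_pos _ (normSq_pos.mpr hw1)
  rw [normSq_apply] at hnormSq
  nlinarith

theorem re_div_add_pos {a : ℝ} (ha : 0 < a) {s : ℂ} (hs : 0 < s.re) :
    0 < ((a : ℂ) / (s + a)).re := by
  rw [div_eq_mul_inv, re_ofReal_mul]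
  exact mul_pos ha (re_inv_pos (by simp; linarith))

theorem norm_le_of_forall_norm_eq_one_le {f : ℂ → ℂ} (hf : Differentiable ℂ f) {C : ℝ}
    (hC : ∀ z : ℂ, ‖z‖ = 1 → ‖f z‖ ≤ C) {z : ℂ} (hz : ‖z‖ ≤ 1) : ‖f z‖ ≤ C := by
  refine norm_le_of_forall_mem_frontier_norm_le Metric.isBounded_ball hf.diffContOnCl
    (U := Metric.ball 0 1) (fun w hw => hC w ?_) ?_
  · simpa [frontier_ball (0 : ℂ) one_ne_zero] using hw
  · simpa [closure_ball (0 : ℂ) one_ne_zero] using hz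

theorem exists_exp_neg_mul_I_eq {T : ℝ} (hT : T ≠ 0) {z : ℂ} (hz : ‖z‖ = 1) :
    ∃ ω : ℝ, exp (-(T * (I * ω))) = z := by
  refine ⟨-z.arg / T, ?_⟩
  have hT' : (T : ℂ) ≠ 0 := ofReal_ne_zero.mpr hT
  have he : -((T : ℂ) * (I * ((-z.arg / T : ℝ) : ℂ))) = z.arg * I := by
    push_cast
    field_simp
  rw [he]
  conv_rhs => rw [← norm_mul_exp_arg_mul_I z, hz]
  simp

end Complex

section DelaySum

variable {ι : Type*} [Fintype ι] (T : ℝ) (β : ι → ℂ) (m : ι → ℕ)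

noncomputable def delaySum (s : ℂ) : ℂ :=
  ∑ k, β k * exp (-((m k : ℂ) * T * s))

theorem delaySum_eq_mul_sum_pow (hm : ∀ k, 0 < m k) (s : ℂ) :
    delaySum T β m s = exp (-(T * s)) * ∑ k, β k * exp (-(T * s)) ^ (m k - 1) := by
  rw [delaySum, Finset.mul_sum]
  refine Finset.sum_congr rfl fun k _ => ?_
  have hpow : exp (-((m k : ℂ) * T * s)) = exp (-(T * s)) ^ (m k) := by
    rw [← Complex.exp_nat_mul]
    ring_nf
  rw [hpow, ← Nat.succ_pred_eq_of_pos (hm k), pow_succ']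
  simp only [Nat.pred_eq_sub_one, Nat.succ_sub_one]
  ring

theorem norm_delaySum_lt_one (hT : 0 < T) (hm : ∀ k, 0 < m k)
    (hbound : ∀ ω : ℝ, ‖delaySum T β m (I * ω)‖ ≤ 1) {s : ℂ} (hs : 0 < s.re) :
    ‖delaySum T β m s‖ < 1 := by
  set g : ℂ → ℂ := fun z => ∑ k, β k * z ^ (m k - 1)
  have hg : Differentiable ℂ g :=
    Differentiable.fun_sum fun k _ => (differentiable_pow _).const_mul _
  have hg_circle : ∀ z : ℂ, ‖z‖ = 1 → ‖g z‖ ≤ 1 := by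
    intro z hz
    obtain ⟨ω, rfl⟩ := exists_exp_neg_mul_I_eq hT.ne' hz
    simpa [delaySum_eq_mul_sum_pow T β m hm, hz, g] using hbound ω
  have hz : ‖exp (-(T * s))‖ < 1 := by
    rw [norm_exp, Real.exp_lt_one_iff]
    simpa [mul_re] using mul_pos hT hs
  rw [delaySum_eq_mul_sum_pow T β m hm, norm_mul]
  calc ‖exp (-(T * s))‖ * ‖g (exp (-(T * s)))‖
      ≤ ‖exp (-(T * s))‖ * 1 :=
        mul_le_mul_of_nonneg_left (norm_le_of_forall_norm_eq_one_le hg hg_circle hz.le)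
          (norm_nonneg _)
    _ < 1 := by rwa [mul_one]

end DelaySum

theorem stmt3_general
    (T : ℝ) (hT : 0 < T)
    (K : ℕ)
    (β : Fin K → ℝ)
    (m : Fin K → ℕ) (hm : ∀ k, 0 < m k)
    (Φ : ℂ → ℂ)
    (hΦ : ∀ s : ℂ, Φ s = ∑ k : Fin K, (β k : ℂ) * Complex.exp (-((m k : ℂ) * (T : ℂ) * s)))
    (hbound : ∀ ω : ℝ, ‖Φ (Complex.I * (ω : ℂ))‖ ≤ 1)
    (ωb ωc L : ℝ) (hωb : 0 < ωb) (hωc : 0 < ωc) (hL : 0 < L)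
    (Γ : ℂ → ℂ)
    (hΓ : ∀ s : ℂ, Γ s = ((ωc : ℂ) * (L : ℂ) / 2) * ((1 + Φ s) / (1 - Φ s))
        * ((ωb : ℂ) / (s + (ωb : ℂ)))) :
    ∀ s : ℂ, 0 < s.re → 1 + Γ s ≠ 0 := by
  intro s hs
  have hΦ_eq : Φ = delaySum T (fun k => (β k : ℂ)) m := funext hΦ
  subst hΦ_eq
  have hΦs := norm_delaySum_lt_one T _ m hT hm hbound hs
  have hgain : 0 < (((ωc : ℂ) * L / 2) * ((1 + delaySum T (fun k => (β k : ℂ)) m s) /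
      (1 - delaySum T (fun k => (β k : ℂ)) m s))).re := by
    rw [show (ωc : ℂ) * L / 2 = ((ωc * L / 2 : ℝ) : ℂ) by push_cast; ring, re_ofReal_mul]
    exact mul_pos (by positivity) (re_one_add_div_one_sub_pos hΦs)
  rw [hΓ]
  exact one_add_mul_ne_zero_of_re_pos hgain (re_div_add_pos hωb hs)

/-- For the open-loop transfer function
`Γ(s) = (ω_c L/2)·((1+Φ(s))/(1−Φ(s)))·(ω_b/(s+ω_b))`, one has `1 + Γ(s) ≠ 0` for every
`s` with `Re s > 0`, so the sensitivity function `S(s) = 1/(1+Γ(s))` is well defined and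
zero-free on the open right half-plane. -/
theorem stmt3
    (T : ℝ) (hT : 0 < T)
    (K : ℕ) (hK : 1 ≤ K)
    (β : Fin K → ℝ) (hβ : ∃ k, β k ≠ 0)
    (m : Fin K → ℕ) (hm : ∀ k, 0 < m k) (hm_inj : Function.Injective m)
    (Φ : ℂ → ℂ)
    (hΦ : ∀ s : ℂ, Φ s = ∑ k : Fin K, (β k : ℂ) * Complex.exp (-((m k : ℂ) * (T : ℂ) * s)))
    (hbound : ∀ ω : ℝ, ‖Φ (Complex.I * (ω : ℂ))‖ ≤ 1)
    (ωb ωc L : ℝ) (hωb : 0 < ωb) (hωc : 0 < ωc) (hL : 0 < L)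
    (Γ : ℂ → ℂ)
    (hΓ : ∀ s : ℂ, Γ s = ((ωc : ℂ) * (L : ℂ) / 2) * ((1 + Φ s) / (1 - Φ s))
        * ((ωb : ℂ) / (s + (ωb : ℂ)))) :
    ∀ s : ℂ, 0 < s.re → 1 + Γ s ≠ 0 :=
  stmt3_general T hT K β m hm Φ hΦ hbound ωb ωc L hωb hωc hL Γ hΓ
end

section
/- (Bode-like sensitivity integral, discrete time.) Let T, ω_b, ω_c, L > 0 and let Φ̃(z) = Σ_{k=1}^K p_k·z^{−k} with real coefficients p_k. Define Γ̃(z) = (ω_c·L/2)·((1+Φ̃(z))/(1−Φ̃(z)))·(ω_b·T·z/((1+ω_b·T)·z − 1)) and S̃(z) = 1/(1+Γ̃(z)). Assume 1 − Φ̃(z) ≠ 0 and 1 + Γ̃(z) ≠ 0 for every complex z with |z| > 1. Then lim_{ε→1⁺} ∫₀^{2π} ln|S̃(ε·e^{iΩ})| dΩ = 2π·ln(2+2·ω_b·T) − 2π·ln(2+2·ω_b·T+ω_b·ω_c·L·T). -/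
open Complex Real Filter Set MeasureTheory Topology intervalIntegral Metric

/-!
In the variable `w = z⁻¹` the filter becomes the polynomial `P w = Σ p_k w^k` and the sensitivity
becomes `S̃(w⁻¹) = D(w) / N(w)` with `D(w) = 2 (1 - P w) (1 + ω_b T - w)` and
`N(w) = D(w) + ω_c L ω_b T (1 + P w)`. The hypotheses say that `D` and `N` have no zeros
in the open unit disc, so `log ‖D‖` and `log ‖N‖` are harmonic there. Inversion maps the circle of
radius `ε > 1` onto the circle of radius `ε⁻¹ < 1`, and the mean value property gives
`∫ log ‖S̃(ε e^{iΩ})‖ dΩ = 2π (log ‖D 0‖ - log ‖N 0‖)` for every `ε > 1`: the integral is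
constant to the right of `1`.
-/

theorem one_lt_norm_inv {𝕜 : Type*} [NormedDivisionRing 𝕜] {w : 𝕜} (hw₀ : w ≠ 0)
    (hw : w ∈ ball (0 : 𝕜) 1) : 1 < ‖w⁻¹‖ := by
  rw [norm_inv, one_lt_inv₀ (norm_pos_iff.mpr hw₀)]
  exact mem_ball_zero_iff.mp hw

theorem inv_mem_ball_zero_one {𝕜 : Type*} [NormedDivisionRing 𝕜] {z : 𝕜} (hz : 1 < ‖z‖) :
    z⁻¹ ∈ ball (0 : 𝕜) 1 := by
  rw [mem_ball_zero_iff, norm_inv]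
  exact inv_lt_one_of_one_lt₀ hz

theorem circleAverage_comp_inv {E : Type*} [NormedAddCommGroup E] [NormedSpace ℝ E]
    (f : ℂ → E) (R : ℝ) :
    circleAverage (fun z ↦ f z⁻¹) 0 R = circleAverage f 0 R⁻¹ := by
  rw [circleAverage_eq_circleAverage_zero_one, circleAverage_eq_circleAverage_zero_one (R := R⁻¹),
    ← circleAverage_zero_one_congr_inv]
  congr 1
  ext z
  simp [mul_comm]

theorem integral_ofReal_mul_exp_eq_circleAverage (f : ℂ → ℝ) (R : ℝ) :
    ∫ θ in (0 : ℝ)..2 * π, f (R * exp (θ * I)) = 2 * π * circleAverage f 0 R := by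
  rw [circleAverage_def, smul_eq_mul, ← mul_assoc, mul_inv_cancel₀ two_pi_pos.ne', one_mul]
  simp [circleMap]

theorem circleAverage_log_norm_of_eq_div_inv {S D N : ℂ → ℂ}
    (hD : AnalyticOnNhd ℂ D (ball 0 1)) (hN : AnalyticOnNhd ℂ N (ball 0 1))
    (hD₀ : ∀ w ∈ ball 0 1, D w ≠ 0) (hN₀ : ∀ w ∈ ball 0 1, N w ≠ 0)
    (hS : ∀ z : ℂ, 1 < ‖z‖ → S z = D z⁻¹ / N z⁻¹) {ε : ℝ} (hε : 1 < ε) :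
    circleAverage (fun z ↦ Real.log ‖S z‖) 0 ε = Real.log ‖D 0‖ - Real.log ‖N 0‖ := by
  have hball : closedBall (0 : ℂ) |ε⁻¹| ⊆ ball 0 1 := by
    refine closedBall_subset_ball ?_
    rw [abs_inv, abs_of_pos (by linarith)]
    exact inv_lt_one_of_one_lt₀ hε
  have hsphere : sphere (0 : ℂ) |ε⁻¹| ⊆ ball 0 1 := sphere_subset_closedBall.trans hball
  have hS_sphere : EqOn (fun z ↦ Real.log ‖S z‖) (fun z ↦ Real.log ‖D z⁻¹ / N z⁻¹‖)
      (sphere 0 |ε|) := fun z hz ↦ by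
    dsimp only
    rw [hS z (by rwa [mem_sphere_zero_iff_norm.mp hz, abs_of_pos (by linarith)])]
  have hlog_div : EqOn (fun w ↦ Real.log ‖D w / N w‖)
      (fun w ↦ Real.log ‖D w‖ - Real.log ‖N w‖) (sphere 0 |ε⁻¹|) := fun w hw ↦ by
    dsimp only
    rw [norm_div, Real.log_div (norm_ne_zero_iff.mpr (hD₀ w (hsphere hw)))
      (norm_ne_zero_iff.mpr (hN₀ w (hsphere hw)))]
  rw [circleAverage_congr_sphere hS_sphere, circleAverage_comp_inv (fun w ↦ Real.log ‖D w / N w‖),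
    circleAverage_congr_sphere hlog_div,
    circleAverage_fun_sub ((hD.mono hsphere).meromorphicOn.circleIntegrable_log_norm)
      ((hN.mono hsphere).meromorphicOn.circleIntegrable_log_norm),
    (hD.mono hball).circleAverage_log_norm_of_ne_zero fun w hw ↦ hD₀ w (hball hw),
    (hN.mono hball).circleAverage_log_norm_of_ne_zero fun w hw ↦ hN₀ w (hball hw)]

noncomputable def lowPassPoly (K : ℕ) (p : ℕ → ℝ) (w : ℂ) : ℂ :=
  ∑ k ∈ Finset.Icc 1 K, (p k : ℂ) * w ^ k

def sensitivityDen (b : ℂ) (P : ℂ → ℂ) (w : ℂ) : ℂ := 2 * (1 - P w) * (1 + b - w)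

def sensitivityNum (a b : ℂ) (P : ℂ → ℂ) (w : ℂ) : ℂ :=
  sensitivityDen b P w + a * b * (1 + P w)

section LowPass

variable {K : ℕ} {p : ℕ → ℝ} {Φ Γ : ℂ → ℂ} {a b w : ℂ}

theorem lowPassPoly_zero : lowPassPoly K p 0 = 0 :=
  Finset.sum_eq_zero fun k hk ↦ by
    rw [zero_pow (Nat.one_le_iff_ne_zero.mp (Finset.mem_Icc.mp hk).1), mul_zero]

theorem differentiable_lowPassPoly : Differentiable ℂ (lowPassPoly K p) := by
  unfold lowPassPoly
  fun_prop

theorem differentiable_sensitivityDen {P : ℂ → ℂ} (hP : Differentiable ℂ P) :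
    Differentiable ℂ (sensitivityDen b P) := by
  unfold sensitivityDen
  fun_prop

theorem differentiable_sensitivityNum {P : ℂ → ℂ} (hP : Differentiable ℂ P) :
    Differentiable ℂ (sensitivityNum a b P) := by
  unfold sensitivityNum sensitivityDen
  fun_prop

theorem sensitivityDen_zero : sensitivityDen b (lowPassPoly K p) 0 = 2 * (1 + b) := by
  simp [sensitivityDen, lowPassPoly_zero]

theorem sensitivityNum_zero :
    sensitivityNum a b (lowPassPoly K p) 0 = 2 * (1 + b) + a * b := by
  simp [sensitivityNum, sensitivityDen_zero, lowPassPoly_zero]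

theorem apply_inv_eq_lowPassPoly
    (hΦ : ∀ z : ℂ, Φ z = ∑ k ∈ Finset.Icc 1 K, (p k : ℂ) * z ^ (-(k : ℤ))) (w : ℂ) :
    Φ w⁻¹ = lowPassPoly K p w := by
  simp [hΦ, lowPassPoly, zpow_neg]

theorem one_sub_lowPassPoly_ne_zero
    (hΦ : ∀ z : ℂ, Φ z = ∑ k ∈ Finset.Icc 1 K, (p k : ℂ) * z ^ (-(k : ℤ)))
    (hΦ₁ : ∀ z : ℂ, 1 < ‖z‖ → 1 - Φ z ≠ 0) (hw : w ∈ ball 0 1) :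
    1 - lowPassPoly K p w ≠ 0 := by
  rcases eq_or_ne w 0 with rfl | hw₀
  · simp [lowPassPoly_zero]
  · rw [← apply_inv_eq_lowPassPoly hΦ]
    exact hΦ₁ _ (one_lt_norm_inv hw₀ hw)

theorem sensitivityDen_ne_zero {P : ℂ → ℂ} (hb : 1 ≤ ‖1 + b‖) (hP : 1 - P w ≠ 0)
    (hw : w ∈ ball 0 1) : sensitivityDen b P w ≠ 0 := by
  refine mul_ne_zero (mul_ne_zero two_ne_zero hP) (sub_ne_zero.mpr ?_)
  rintro rfl
  exact (mem_ball_zero_iff.mp hw).not_ge hb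

theorem one_add_apply_inv_eq_sensitivityNum_div_sensitivityDen
    (hΦ : ∀ z : ℂ, Φ z = ∑ k ∈ Finset.Icc 1 K, (p k : ℂ) * z ^ (-(k : ℤ)))
    (hΓ : ∀ z : ℂ, Γ z = a / 2 * ((1 + Φ z) / (1 - Φ z)) * (b * z / ((1 + b) * z - 1)))
    (hw : w ≠ 0) (hD : sensitivityDen b (lowPassPoly K p) w ≠ 0) :
    1 + Γ w⁻¹ = sensitivityNum a b (lowPassPoly K p) w / sensitivityDen b (lowPassPoly K p) w := by
  have hP : 1 - lowPassPoly K p w ≠ 0 := fun h ↦ hD (by simp [sensitivityDen, h])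
  have hb : 1 + b - w ≠ 0 := fun h ↦ hD (by simp [sensitivityDen, h])
  have hbw : (1 + b) * w⁻¹ - 1 = (1 + b - w) * w⁻¹ := by field_simp
  rw [hΓ, apply_inv_eq_lowPassPoly hΦ, hbw]
  simp only [sensitivityNum, sensitivityDen]
  field_simp

theorem sensitivityNum_ne_zero
    (hΦ : ∀ z : ℂ, Φ z = ∑ k ∈ Finset.Icc 1 K, (p k : ℂ) * z ^ (-(k : ℤ)))
    (hΓ : ∀ z : ℂ, Γ z = a / 2 * ((1 + Φ z) / (1 - Φ z)) * (b * z / ((1 + b) * z - 1)))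
    (hΓ₁ : ∀ z : ℂ, 1 < ‖z‖ → 1 + Γ z ≠ 0) (h₀ : sensitivityNum a b (lowPassPoly K p) 0 ≠ 0)
    (hD : sensitivityDen b (lowPassPoly K p) w ≠ 0) (hw : w ∈ ball 0 1) :
    sensitivityNum a b (lowPassPoly K p) w ≠ 0 := by
  rcases eq_or_ne w 0 with rfl | hw₀
  · exact h₀
  · have h := hΓ₁ w⁻¹ (one_lt_norm_inv hw₀ hw)
    rw [one_add_apply_inv_eq_sensitivityNum_div_sensitivityDen hΦ hΓ hw₀ hD] at h
    exact (div_ne_zero_iff.mp h).1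

theorem apply_eq_sensitivityDen_div_sensitivityNum
    (hΦ : ∀ z : ℂ, Φ z = ∑ k ∈ Finset.Icc 1 K, (p k : ℂ) * z ^ (-(k : ℤ)))
    (hΓ : ∀ z : ℂ, Γ z = a / 2 * ((1 + Φ z) / (1 - Φ z)) * (b * z / ((1 + b) * z - 1)))
    {S : ℂ → ℂ} (hS : ∀ z : ℂ, S z = 1 / (1 + Γ z)) {z : ℂ} (hz : z ≠ 0)
    (hD : sensitivityDen b (lowPassPoly K p) z⁻¹ ≠ 0) :
    S z = sensitivityDen b (lowPassPoly K p) z⁻¹ / sensitivityNum a b (lowPassPoly K p) z⁻¹ := by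
  have h := one_add_apply_inv_eq_sensitivityNum_div_sensitivityDen hΦ hΓ (inv_ne_zero hz) hD
  rw [inv_inv] at h
  rw [hS, h, one_div_div]

end LowPass

/-- Bode-like sensitivity integral, discrete time:
`lim_{ε→1⁺} ∫₀^{2π} ln|S̃(ε e^{iΩ})| dΩ
  = 2π ln(2+2ω_bT) − 2π ln(2+2ω_bT+ω_bω_cLT)`. -/
theorem stmt6
    (T ωb ωc L : ℝ) (hT : 0 < T) (hωb : 0 < ωb) (hωc : 0 < ωc) (hL : 0 < L)
    (K : ℕ) (p : ℕ → ℝ)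
    (Φ : ℂ → ℂ)
    (hΦ : ∀ z : ℂ, Φ z = ∑ k ∈ Finset.Icc 1 K, (p k : ℂ) * z ^ (-(k : ℤ)))
    (Γ : ℂ → ℂ)
    (hΓ : ∀ z : ℂ, Γ z = ((ωc : ℂ) * (L : ℂ) / 2) * ((1 + Φ z) / (1 - Φ z))
        * ((ωb : ℂ) * (T : ℂ) * z / ((1 + (ωb : ℂ) * (T : ℂ)) * z - 1)))
    (S : ℂ → ℂ) (hS : ∀ z : ℂ, S z = 1 / (1 + Γ z))
    (hpole : ∀ z : ℂ, 1 < ‖z‖ → 1 - Φ z ≠ 0 ∧ 1 + Γ z ≠ 0) :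
    Tendsto (fun ε : ℝ =>
        ∫ Ω in (0 : ℝ)..(2 * π),
          Real.log ‖S ((ε : ℂ) * Complex.exp ((Ω : ℂ) * Complex.I))‖)
      (𝓝[>] 1)
      (𝓝 (2 * π * Real.log (2 + 2 * ωb * T)
            - 2 * π * Real.log (2 + 2 * ωb * T + ωb * ωc * L * T))) := by
  set P := lowPassPoly K p
  have hD₀ : sensitivityDen (ωb * T) P 0 = ((2 + 2 * ωb * T : ℝ) : ℂ) := by
    rw [sensitivityDen_zero]; push_cast; ring
  have hN₀ : sensitivityNum (ωc * L) (ωb * T) P 0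
      = ((2 + 2 * ωb * T + ωb * ωc * L * T : ℝ) : ℂ) := by
    rw [sensitivityNum_zero]; push_cast; ring
  have hb : 1 ≤ ‖1 + (ωb : ℂ) * T‖ := by
    rw [← ofReal_mul, ← ofReal_one, ← ofReal_add, Complex.norm_of_nonneg (by positivity)]
    linarith [mul_pos hωb hT]
  have hD : ∀ w ∈ ball (0 : ℂ) 1, sensitivityDen (ωb * T) P w ≠ 0 := fun w hw ↦
    sensitivityDen_ne_zero hb (one_sub_lowPassPoly_ne_zero hΦ (fun z hz ↦ (hpole z hz).1) hw) hw
  have hN : ∀ w ∈ ball (0 : ℂ) 1, sensitivityNum (ωc * L) (ωb * T) P w ≠ 0 :=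
    fun w hw ↦ sensitivityNum_ne_zero hΦ hΓ (fun z hz ↦ (hpole z hz).2)
      (by rw [hN₀]; exact ofReal_ne_zero.mpr (by positivity)) (hD w hw) hw
  refine tendsto_const_nhds.congr'
    (EventuallyEq.symm (eventually_nhdsWithin_of_forall fun ε (hε : 1 < ε) ↦ ?_))
  dsimp only
  rw [integral_ofReal_mul_exp_eq_circleAverage (fun z ↦ Real.log ‖S z‖),
    circleAverage_log_norm_of_eq_div_inv
      ((differentiable_sensitivityDen differentiable_lowPassPoly).differentiableOn.analyticOnNhd
        isOpen_ball)
      ((differentiable_sensitivityNum differentiable_lowPassPoly).differentiableOn.analyticOnNhd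
        isOpen_ball)
      hD hN (fun z hz ↦ apply_eq_sensitivityDen_div_sensitivityNum hΦ hΓ hS
        (norm_pos_iff.mp (one_pos.trans hz)) (hD _ (inv_mem_ball_zero_one hz))) hε,
    hD₀, hN₀, Complex.norm_of_nonneg (by positivity), Complex.norm_of_nonneg (by positivity)]
  ring
end

section
/- Let T > 0 and let Φ(s) = Σ_{k=1}^K β_k · exp(−m_k·T·s) with real β_k not all zero and distinct positive integers m_k, and assume |Φ(iω)| ≤ 1 for every real ω. Let ω_b, ω_c, L > 0 and Γ(s) = (ω_c·L/2)·((1+Φ(s))/(1−Φ(s)))·(ω_b/(s+ω_b)). Fix 0 < ε < δ and set M = sup { |Φ(s)| : Re s = ε } (so M < 1). Then for every R > 2·(δ + ω_b) and every θ ∈ [−π/2, π/2], one has |Γ(δ + R·e^{iθ})| ≤ 2·ω_b·ω_c·L / ((1 − M)·R). -/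
open Complex Real Set

/-! Φ(s) = P(e^{-Ts}) for the polynomial P(z) = Σ β_k z^{m_k}, which vanishes at 0 because every
m_k ≥ 1; the hypothesis on the imaginary axis says |P| ≤ 1 on the unit circle. By the Schwarz lemma
|P(z)| ≤ |z|, so |Φ| ≤ e^{-Tε} < 1 on the line Re s = ε, whence M < 1. The half-plane Re s ≥ ε is
mapped by s ↦ e^{-Ts} onto the closed disc of radius e^{-Tε}, whose boundary circle is the image of
that line, so the maximum modulus principle gives |Φ| ≤ M on the half-plane, in particular on the arc
δ + R e^{iθ}. There |s + ω_b| ≥ R - (δ + ω_b) ≥ R/2, and the bound follows from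
|(1 + w)/(1 - w)| ≤ 2/(1 - M) for |w| ≤ M. -/

namespace Complex

theorem norm_le_of_forall_norm_eq_le {E : Type*} [NormedAddCommGroup E] [NormedSpace ℂ E]
    {f : ℂ → E} (hf : Differentiable ℂ f) {r C : ℝ} (hr : 0 < r)
    (h : ∀ z : ℂ, ‖z‖ = r → ‖f z‖ ≤ C) {z : ℂ} (hz : ‖z‖ ≤ r) : ‖f z‖ ≤ C := by
  refine norm_le_of_forall_mem_frontier_norm_le (U := Metric.ball 0 r) Metric.isBounded_ball
    hf.diffContOnCl ?_ ?_
  · rw [frontier_ball 0 hr.ne']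
    exact fun w hw => h w (mem_sphere_zero_iff_norm.mp hw)
  · rwa [closure_ball 0 hr.ne', mem_closedBall_zero_iff]

theorem norm_le_norm_of_forall_norm_eq_one_le {f : ℂ → ℂ} (hf : Differentiable ℂ f)
    (h₀ : f 0 = 0) (h : ∀ z : ℂ, ‖z‖ = 1 → ‖f z‖ ≤ 1) {z : ℂ} (hz : ‖z‖ ≤ 1) :
    ‖f z‖ ≤ ‖z‖ := by
  have hf_eq : ∀ w, f w = w * dslope f 0 w := fun w => by
    simpa using (sub_smul_dslope_of_zero h₀ w).symm
  have hg : Differentiable ℂ (dslope f 0) := fun w =>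
    ((differentiableOn_dslope Filter.univ_mem).mpr hf.differentiableOn).differentiableAt
      Filter.univ_mem
  have hg_le : ‖dslope f 0 z‖ ≤ 1 := by
    refine norm_le_of_forall_norm_eq_le hg one_pos (fun w hw => ?_) hz
    simpa [hf_eq w, hw] using h w hw
  calc ‖f z‖ = ‖z‖ * ‖dslope f 0 z‖ := by rw [hf_eq, norm_mul]
    _ ≤ ‖z‖ := mul_le_of_le_one_right (norm_nonneg z) hg_le

theorem norm_exp_neg_ofReal_mul_s11 (T : ℝ) (s : ℂ) :
    ‖exp (-(T * s))‖ = Real.exp (-(T * s.re)) := by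
  simp [norm_exp]

theorem exists_re_eq_and_exp_neg_ofReal_mul_eq {T a : ℝ} (hT : T ≠ 0) {z : ℂ}
    (hz : ‖z‖ = Real.exp (-(T * a))) : ∃ s : ℂ, s.re = a ∧ exp (-(T * s)) = z := by
  have hz₀ : z ≠ 0 := norm_ne_zero_iff.mp (hz ▸ (Real.exp_pos _).ne')
  have hT' : (T : ℂ) ≠ 0 := ofReal_ne_zero.mpr hT
  refine ⟨-log z / T, ?_, ?_⟩
  · rw [div_ofReal_re, neg_re, log_re, hz, Real.log_exp]
    field_simp
  · rw [mul_div_cancel₀ _ hT', neg_neg, exp_log hz₀]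

section ExpComposition

variable {Φ f : ℂ → ℂ} {T : ℝ}

theorem norm_le_exp_neg_mul_re_of_comp_exp (hf : Differentiable ℂ f) (h₀ : f 0 = 0) (hT : 0 < T)
    (hΦ : ∀ s, Φ s = f (exp (-(T * s)))) (him : ∀ ω : ℝ, ‖Φ (I * ω)‖ ≤ 1) {s : ℂ}
    (hs : 0 ≤ s.re) : ‖Φ s‖ ≤ Real.exp (-(T * s.re)) := by
  rw [hΦ]
  refine (norm_le_norm_of_forall_norm_eq_one_le hf h₀ (fun w hw => ?_) ?_).trans_eq
    (norm_exp_neg_ofReal_mul_s11 T s)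
  · obtain ⟨s', hs', rfl⟩ :=
      exists_re_eq_and_exp_neg_ofReal_mul_eq (a := 0) hT.ne' (by simpa using hw)
    have hs'_eq : s' = I * s'.im := by apply Complex.ext <;> simp [hs']
    rw [hs'_eq, ← hΦ]
    exact him _
  · rw [norm_exp_neg_ofReal_mul_s11, Real.exp_le_one_iff, neg_nonpos]
    exact mul_nonneg hT.le hs

theorem norm_le_of_le_re_of_comp_exp (hf : Differentiable ℂ f) (hT : 0 < T)
    (hΦ : ∀ s, Φ s = f (exp (-(T * s)))) {a C : ℝ} (hline : ∀ s : ℂ, s.re = a → ‖Φ s‖ ≤ C)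
    {s : ℂ} (hs : a ≤ s.re) : ‖Φ s‖ ≤ C := by
  rw [hΦ]
  refine norm_le_of_forall_norm_eq_le hf (Real.exp_pos (-(T * a))) (fun w hw => ?_) ?_
  · obtain ⟨s', hs', rfl⟩ := exists_re_eq_and_exp_neg_ofReal_mul_eq hT.ne' hw
    exact hΦ s' ▸ hline s' hs'
  · rw [norm_exp_neg_ofReal_mul_s11, Real.exp_le_exp, neg_le_neg_iff]
    exact mul_le_mul_of_nonneg_left hs hT.le

theorem exp_neg_mul_mem_upperBounds_norm_re_eq_of_comp_exp (hf : Differentiable ℂ f)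
    (h₀ : f 0 = 0) (hT : 0 < T) (hΦ : ∀ s, Φ s = f (exp (-(T * s))))
    (him : ∀ ω : ℝ, ‖Φ (I * ω)‖ ≤ 1) {ε : ℝ} (hε : 0 ≤ ε) :
    Real.exp (-(T * ε)) ∈ upperBounds {x : ℝ | ∃ s : ℂ, s.re = ε ∧ x = ‖Φ s‖} := by
  rintro _ ⟨s, hs, rfl⟩
  exact hs ▸ norm_le_exp_neg_mul_re_of_comp_exp hf h₀ hT hΦ him (hs ▸ hε)

theorem sSup_norm_re_eq_lt_one_of_comp_exp (hf : Differentiable ℂ f) (h₀ : f 0 = 0)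
    (hT : 0 < T) (hΦ : ∀ s, Φ s = f (exp (-(T * s)))) (him : ∀ ω : ℝ, ‖Φ (I * ω)‖ ≤ 1)
    {ε : ℝ} (hε : 0 < ε) : sSup {x : ℝ | ∃ s : ℂ, s.re = ε ∧ x = ‖Φ s‖} < 1 := by
  have hne : {x : ℝ | ∃ s : ℂ, s.re = ε ∧ x = ‖Φ s‖}.Nonempty := ⟨_, ε, ofReal_re ε, rfl⟩
  refine (csSup_le hne ?_).trans_lt (Real.exp_lt_one_iff.mpr (neg_neg_of_pos (mul_pos hT hε)))
  exact exp_neg_mul_mem_upperBounds_norm_re_eq_of_comp_exp hf h₀ hT hΦ him hε.le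

theorem norm_le_sSup_norm_re_eq_of_comp_exp (hf : Differentiable ℂ f) (h₀ : f 0 = 0)
    (hT : 0 < T) (hΦ : ∀ s, Φ s = f (exp (-(T * s)))) (him : ∀ ω : ℝ, ‖Φ (I * ω)‖ ≤ 1)
    {ε : ℝ} (hε : 0 ≤ ε) {s : ℂ} (hs : ε ≤ s.re) :
    ‖Φ s‖ ≤ sSup {x : ℝ | ∃ s : ℂ, s.re = ε ∧ x = ‖Φ s‖} := by
  have hbdd : BddAbove {x : ℝ | ∃ s : ℂ, s.re = ε ∧ x = ‖Φ s‖} :=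
    ⟨_, exp_neg_mul_mem_upperBounds_norm_re_eq_of_comp_exp hf h₀ hT hΦ him hε⟩
  exact norm_le_of_le_re_of_comp_exp hf hT hΦ (fun s' hs' => le_csSup hbdd ⟨s', hs', rfl⟩) hs

end ExpComposition

theorem sum_mul_exp_neg_mul_eq_sum_mul_pow {ι : Type*} [Fintype ι] (β : ι → ℂ)
    (m : ι → ℕ) (T s : ℂ) :
    ∑ k, β k * exp (-(m k * T * s)) = ∑ k, β k * exp (-(T * s)) ^ m k := by
  refine Finset.sum_congr rfl fun k _ => ?_
  rw [← Complex.exp_nat_mul]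
  ring_nf

theorem half_le_norm_add_mul_exp_mul_I {a : ℂ} {R : ℝ} (θ : ℝ) (h : 2 * ‖a‖ ≤ R) :
    R / 2 ≤ ‖a + R * exp (θ * I)‖ := by
  have hR : ‖(R : ℂ) * exp (θ * I)‖ = R := by
    rw [norm_mul, norm_exp_ofReal_mul_I, mul_one, norm_real,
      Real.norm_of_nonneg (by linarith [norm_nonneg a])]
  calc R / 2 ≤ ‖(R : ℂ) * exp (θ * I)‖ - ‖a‖ := by linarith
    _ ≤ ‖a + R * exp (θ * I)‖ := by
      rw [add_comm]
      exact norm_sub_le_norm_add _ _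

theorem norm_one_add_div_one_sub_le {w : ℂ} {M : ℝ} (hw : ‖w‖ ≤ M) (hM : M < 1) :
    ‖(1 + w) / (1 - w)‖ ≤ 2 / (1 - M) := by
  have hnum : ‖1 + w‖ ≤ 2 := (norm_add_le 1 w).trans (by rw [norm_one]; linarith)
  have hden : 1 - M ≤ ‖1 - w‖ := by
    calc 1 - M ≤ ‖(1 : ℂ)‖ - ‖w‖ := by rw [norm_one]; linarith
      _ ≤ ‖1 - w‖ := norm_sub_norm_le 1 w
  rw [norm_div]
  exact div_le_div₀ zero_le_two hnum (by linarith) hden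

end Complex

theorem stmt11_general
    (T : ℝ) (hT : 0 < T)
    (K : ℕ)
    (β : Fin K → ℝ)
    (m : Fin K → ℕ) (hm : ∀ k, 0 < m k)
    (Φ : ℂ → ℂ)
    (hΦ : ∀ s : ℂ, Φ s = ∑ k : Fin K, (β k : ℂ) * Complex.exp (-((m k : ℂ) * (T : ℂ) * s)))
    (hbound : ∀ ω : ℝ, ‖Φ (Complex.I * (ω : ℂ))‖ ≤ 1)
    (ωb ωc L : ℝ) (hωb : 0 < ωb) (hωc : 0 < ωc) (hL : 0 < L)
    (Γ : ℂ → ℂ)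
    (hΓ : ∀ s : ℂ, Γ s = ((ωc : ℂ) * (L : ℂ) / 2) * ((1 + Φ s) / (1 - Φ s))
        * ((ωb : ℂ) / (s + (ωb : ℂ))))
    (ε δ : ℝ) (hε : 0 < ε) (hεδ : ε < δ)
    (M : ℝ) (hM : M = sSup {x : ℝ | ∃ s : ℂ, s.re = ε ∧ x = ‖Φ s‖}) :
    ∀ R : ℝ, 2 * (δ + ωb) < R → ∀ θ ∈ Set.Icc (-(π / 2)) (π / 2),
      ‖Γ ((δ : ℂ) + (R : ℂ) * Complex.exp ((θ : ℂ) * Complex.I))‖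
        ≤ 2 * ωb * ωc * L / ((1 - M) * R) := by
  intro R hR θ hθ
  set P : ℂ → ℂ := fun z => ∑ k, (β k : ℂ) * z ^ m k
  have hΦP : ∀ s, Φ s = P (exp (-(T * s))) := fun s =>
    (hΦ s).trans (sum_mul_exp_neg_mul_eq_sum_mul_pow _ _ _ _)
  have hP : Differentiable ℂ P := by fun_prop
  have hP₀ : P 0 = 0 := by simp [P, fun k => (hm k).ne']
  have hM₁ : M < 1 := hM ▸ sSup_norm_re_eq_lt_one_of_comp_exp hP hP₀ hT hΦP hbound hε
  have hΦM : ∀ s : ℂ, ε ≤ s.re → ‖Φ s‖ ≤ M := fun s hs =>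
    hM ▸ norm_le_sSup_norm_re_eq_of_comp_exp hP hP₀ hT hΦP hbound hε.le hs
  set s₀ : ℂ := δ + R * exp (θ * I)
  have hs₀_re : ε ≤ s₀.re := by
    have hcos := Real.cos_nonneg_of_mem_Icc hθ
    simp only [s₀, add_re, ofReal_re, re_ofReal_mul, exp_ofReal_mul_I_re]
    nlinarith
  have hs₀_add : R / 2 ≤ ‖s₀ + ωb‖ := by
    rw [show s₀ + ωb = ((δ + ωb : ℝ) : ℂ) + R * exp (θ * I) by push_cast; ring]
    refine half_le_norm_add_mul_exp_mul_I θ ?_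
    rw [norm_real, Real.norm_of_nonneg (by linarith)]
    exact hR.le
  calc ‖Γ s₀‖ = ωc * L / 2 * ‖(1 + Φ s₀) / (1 - Φ s₀)‖ * (ωb / ‖s₀ + ωb‖) := by
        rw [hΓ]
        simp [abs_of_pos hωc, abs_of_pos hL, abs_of_pos hωb]
    _ ≤ ωc * L / 2 * (2 / (1 - M)) * (ωb / (R / 2)) := by
        gcongr
        · exact norm_one_add_div_one_sub_le (hΦM s₀ hs₀_re) hM₁
        · linarith
    _ = 2 * ωb * ωc * L / ((1 - M) * R) := by
        field_simp

/-- With `M = sup{|Φ(s)| : Re s = ε} < 1`, for every `R > 2(δ+ω_b)` and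
`θ ∈ [−π/2, π/2]`, `|Γ(δ + R e^{iθ})| ≤ 2 ω_b ω_c L / ((1−M) R)`. -/
theorem stmt11
    (T : ℝ) (hT : 0 < T)
    (K : ℕ) (hK : 1 ≤ K)
    (β : Fin K → ℝ) (hβ : ∃ k, β k ≠ 0)
    (m : Fin K → ℕ) (hm : ∀ k, 0 < m k) (hm_inj : Function.Injective m)
    (Φ : ℂ → ℂ)
    (hΦ : ∀ s : ℂ, Φ s = ∑ k : Fin K, (β k : ℂ) * Complex.exp (-((m k : ℂ) * (T : ℂ) * s)))
    (hbound : ∀ ω : ℝ, ‖Φ (Complex.I * (ω : ℂ))‖ ≤ 1)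
    (ωb ωc L : ℝ) (hωb : 0 < ωb) (hωc : 0 < ωc) (hL : 0 < L)
    (Γ : ℂ → ℂ)
    (hΓ : ∀ s : ℂ, Γ s = ((ωc : ℂ) * (L : ℂ) / 2) * ((1 + Φ s) / (1 - Φ s))
        * ((ωb : ℂ) / (s + (ωb : ℂ))))
    (ε δ : ℝ) (hε : 0 < ε) (hεδ : ε < δ)
    (M : ℝ) (hM : M = sSup {x : ℝ | ∃ s : ℂ, s.re = ε ∧ x = ‖Φ s‖}) :
    ∀ R : ℝ, 2 * (δ + ωb) < R → ∀ θ ∈ Set.Icc (-(π / 2)) (π / 2),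
      ‖Γ ((δ : ℂ) + (R : ℂ) * Complex.exp ((θ : ℂ) * Complex.I))‖
        ≤ 2 * ωb * ωc * L / ((1 - M) * R) :=
  stmt11_general T hT K β m hm Φ hΦ hbound ωb ωc L hωb hωc hL Γ hΓ ε δ hε hεδ M hM
end

section
/- Let T > 0 and let Φ(s) = Σ_{k=1}^K β_k · exp(−m_k·T·s) with real β_k not all zero and distinct positive integers m_k, and assume |Φ(iω)| ≤ 1 for every real ω. Let ω_b, ω_c, L > 0 and Γ(s) = (ω_c·L/2)·((1+Φ(s))/(1−Φ(s)))·(ω_b/(s+ω_b)). Then for every fixed δ > 0, lim_{R→∞} ∫_{−π/2}^{π/2} Γ(δ + R·e^{iθ})·R·e^{iθ} dθ = π·ω_b·ω_c·L/2. -/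
open Complex Real Filter Set Topology intervalIntegral

open MeasureTheory

/-! Since every `m k ≥ 1`, `e^{Ts} Φ(s)` is bounded by `∑ |β k|` on the closed right half-plane,
so Phragmén–Lindelöf turns `‖Φ‖ ≤ 1` on the imaginary axis into `‖Φ s‖ ≤ e^{-T Re s}` there.
On the arc `Re s ≥ δ`, hence `‖Φ‖ ≤ e^{-Tδ} < 1` keeps `(1 + Φ) / (1 - Φ)` bounded, while for
`|θ| < π/2` we have `Re s → ∞`, so `Φ s → 0`, and `ωb (s - δ) / (s + ωb) → ωb`. Dominated
convergence then gives `∫ (ωc L / 2) ωb dθ = π ωb ωc L / 2`. -/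

section ExpSum

variable {ι : Type*} [Fintype ι] (c : ι → ℂ) (m : ι → ℕ) (T : ℝ)

theorem differentiable_expSum :
    Differentiable ℂ fun s : ℂ => ∑ k, c k * exp (-((m k : ℂ) * T * s)) := by
  fun_prop

theorem norm_exp_mul_expSum_le (hT : 0 ≤ T) (hm : ∀ k, 0 < m k) {z : ℂ} (hz : 0 ≤ z.re) :
    ‖exp (T * z) * ∑ k, c k * exp (-((m k : ℂ) * T * z))‖ ≤ ∑ k, ‖c k‖ := by
  rw [Finset.mul_sum]
  refine (norm_sum_le _ _).trans (Finset.sum_le_sum fun k _ => ?_)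
  have hmk : (1 : ℝ) ≤ m k := by exact_mod_cast hm k
  calc ‖exp (T * z) * (c k * exp (-((m k : ℂ) * T * z)))‖
      = ‖c k‖ * Real.exp (-((m k - 1) * (T * z.re))) := by
        rw [mul_left_comm, ← Complex.exp_add, norm_mul, Complex.norm_exp]
        congr 2
        simp [mul_re, mul_im]
        ring
    _ ≤ ‖c k‖ := by
        refine mul_le_of_le_one_right (norm_nonneg _) (Real.exp_le_one_iff.mpr ?_)
        have := mul_nonneg (sub_nonneg.mpr hmk) (mul_nonneg hT hz)
        linarith

end ExpSum

theorem norm_le_exp_neg_mul_re_of_bounded {f : ℂ → ℂ} {T C : ℝ} (hf : Differentiable ℂ f)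
    (hbdd : ∀ z : ℂ, 0 ≤ z.re → ‖exp (T * z) * f z‖ ≤ C) (him : ∀ ω : ℝ, ‖f (I * ω)‖ ≤ 1)
    {z : ℂ} (hz : 0 ≤ z.re) : ‖f z‖ ≤ Real.exp (-(T * z.re)) := by
  have hnorm : ∀ z : ℂ, ‖exp (T * z) * f z‖ = Real.exp (T * z.re) * ‖f z‖ := fun z => by
    rw [norm_mul, Complex.norm_exp, re_ofReal_mul]
  have key : ‖exp (T * z) * f z‖ ≤ 1 := by
    refine PhragmenLindelof.right_half_plane_of_bounded_on_real
      (f := fun z => exp (T * z) * f z) (by fun_prop : Differentiable ℂ _).diffContOnCl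
      ?_ ?_ (fun x => ?_) hz
    · refine ⟨1, one_lt_two, 0, Asymptotics.IsBigO.of_bound C ?_⟩
      refine eventually_inf_principal.2 (Eventually.of_forall fun z hz => ?_)
      simpa using hbdd z (le_of_lt hz)
    · refine ⟨C, eventually_map.2 (eventually_ge_atTop 0 |>.mono fun x hx => ?_)⟩
      exact hbdd x (by simpa using hx)
    · rw [hnorm, mul_comm (x : ℂ) I]
      simpa using him x
  rw [hnorm, ← le_div_iff₀' (Real.exp_pos _), one_div, ← Real.exp_neg] at key
  exact key

section NormedField

variable {𝕜 : Type*} [NormedField 𝕜]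

theorem norm_one_add_div_one_sub_le {z : 𝕜} {q : ℝ} (hz : ‖z‖ ≤ q) (hq : q < 1) :
    ‖(1 + z) / (1 - z)‖ ≤ (1 + q) / (1 - q) := by
  have hsub : 1 - q ≤ ‖1 - z‖ := by
    have := norm_sub_norm_le (1 : 𝕜) z
    rw [norm_one] at this
    linarith
  rw [norm_div]
  refine div_le_div₀ (by linarith [norm_nonneg z]) ?_ (by linarith) hsub
  exact (norm_add_le _ _).trans (by rw [norm_one]; linarith)

theorem norm_div_add_add_mul_le {b c w : 𝕜} (hw : 2 * ‖c + b‖ ≤ ‖w‖) :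
    ‖b / (c + w + b) * w‖ ≤ 2 * ‖b‖ := by
  have hden : ‖w‖ / 2 ≤ ‖c + w + b‖ := by
    have := norm_sub_norm_le w (-(c + b))
    rw [norm_neg, sub_neg_eq_add, show w + (c + b) = c + w + b by ring] at this
    linarith
  rcases (norm_nonneg w).eq_or_lt with hw0 | hw0
  · simp [norm_eq_zero.mp hw0.symm]
  rw [norm_mul, norm_div, div_mul_eq_mul_div, div_le_iff₀ (by linarith)]
  nlinarith [norm_nonneg b]

theorem tendsto_div_add_add_mul_cobounded (b c : 𝕜) :
    Tendsto (fun w => b / (c + w + b) * w) (Bornology.cobounded 𝕜) (𝓝 b) := by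
  have h : Tendsto (fun w : 𝕜 => b / ((c + b) * w⁻¹ + 1)) (Bornology.cobounded 𝕜) (𝓝 b) := by
    simpa [Pi.div_def] using (tendsto_const_nhds (x := b)).div
      ((tendsto_const_nhds (x := c + b)).mul tendsto_inv₀_cobounded |>.add_const 1) (by simp)
  refine h.congr' ?_
  filter_upwards [Bornology.eventually_ne_cobounded 0] with w hw
  field_simp
  ring

end NormedField

theorem tendsto_of_norm_le_exp_neg_mul_re {Φ : ℂ → ℂ} {T : ℝ} (hT : 0 < T)
    (hdecay : ∀ z : ℂ, 0 ≤ z.re → ‖Φ z‖ ≤ Real.exp (-(T * z.re))) :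
    Tendsto Φ (comap re atTop) (𝓝 0) := by
  refine squeeze_zero_norm' ?_ ((Real.tendsto_exp_atBot.comp
    (tendsto_neg_atTop_atBot.comp (tendsto_id.const_mul_atTop hT))).comp tendsto_comap)
  filter_upwards [tendsto_comap.eventually (eventually_ge_atTop 0)] with z hz
  exact hdecay z hz

theorem re_ofReal_add_mul_exp (δ R θ : ℝ) :
    ((δ : ℂ) + R * exp (θ * I)).re = δ + R * Real.cos θ := by
  simp [exp_ofReal_mul_I_re]

theorem norm_ofReal_mul_exp {R : ℝ} (hR : 0 ≤ R) (θ : ℝ) : ‖(R : ℂ) * exp (θ * I)‖ = R := by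
  rw [norm_mul, norm_exp_ofReal_mul_I, mul_one, norm_real, Real.norm_of_nonneg hR]

theorem tendsto_ofReal_mul_exp_cobounded (θ : ℝ) :
    Tendsto (fun R : ℝ => (R : ℂ) * exp (θ * I)) atTop (Bornology.cobounded ℂ) := by
  rw [← tendsto_norm_atTop_iff_cobounded]
  refine tendsto_id.congr' ?_
  filter_upwards [eventually_ge_atTop 0] with R hR
  exact (norm_ofReal_mul_exp hR θ).symm

theorem tendsto_ofReal_add_mul_exp_comap_re (δ : ℝ) {θ : ℝ} (hθ : 0 < Real.cos θ) :
    Tendsto (fun R : ℝ => (δ : ℂ) + R * exp (θ * I)) atTop (comap re atTop) := by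
  rw [tendsto_comap_iff]
  simp only [Function.comp_def, re_ofReal_add_mul_exp]
  exact tendsto_atTop_add_const_left _ _ (tendsto_id.atTop_mul_const hθ)

theorem tendsto_integral_right_arc {Φ : ℂ → ℂ} (hΦ : Continuous Φ) {T : ℝ} (hT : 0 < T)
    (hdecay : ∀ z : ℂ, 0 ≤ z.re → ‖Φ z‖ ≤ Real.exp (-(T * z.re))) (C b : ℂ) {δ : ℝ}
    (hδ : 0 < δ) :
    Tendsto (fun R : ℝ => ∫ θ in (-(π / 2))..(π / 2),
        C * ((1 + Φ (δ + R * exp (θ * I))) / (1 - Φ (δ + R * exp (θ * I))))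
          * (b / (δ + R * exp (θ * I) + b)) * (R * exp (θ * I)))
      atTop (𝓝 (π * (C * b))) := by
  set q := Real.exp (-(T * δ))
  have hq : q < 1 := Real.exp_lt_one_iff.mpr (by nlinarith)
  have harc : uIoc (-(π / 2)) (π / 2) ⊆ Icc (-(π / 2)) (π / 2) := by
    rw [uIoc_of_le (by linarith [pi_pos])]
    exact Ioc_subset_Icc_self
  have hΦq : ∀ R θ : ℝ, 0 ≤ R → θ ∈ Icc (-(π / 2)) (π / 2) →
      ‖Φ (δ + R * exp (θ * I))‖ ≤ q := by
    intro R θ hR hθ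
    have hre : δ ≤ ((δ : ℂ) + R * exp (θ * I)).re := by
      rw [re_ofReal_add_mul_exp]
      nlinarith [mul_nonneg hR (cos_nonneg_of_mem_Icc hθ)]
    exact (hdecay _ (hδ.le.trans hre)).trans (Real.exp_le_exp.mpr (by nlinarith))
  have hval : (π : ℂ) * (C * b) = ∫ _ in (-(π / 2))..(π / 2), C * b := by
    rw [intervalIntegral.integral_const, real_smul]
    push_cast
    ring
  rw [hval]
  refine tendsto_integral_filter_of_dominated_convergence
    (fun _ => ‖C‖ * ((1 + q) / (1 - q)) * (2 * ‖b‖)) ?meas ?bound intervalIntegrable_const ?lim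
  case meas =>
    exact Eventually.of_forall fun R => (by fun_prop : Measurable _).aestronglyMeasurable
  case bound =>
    filter_upwards [eventually_ge_atTop (2 * ‖(δ : ℂ) + b‖)] with R hR
    refine ae_of_all _ fun θ hθ => ?_
    have hR0 : 0 ≤ R := le_trans (by positivity) hR
    rw [mul_assoc, norm_mul, norm_mul]
    gcongr
    · exact norm_one_add_div_one_sub_le (hΦq R θ hR0 (harc hθ)) hq
    · exact norm_div_add_add_mul_le (by rwa [norm_ofReal_mul_exp hR0])
  case lim =>
    filter_upwards [(countable_singleton (π / 2)).ae_notMem volume] with θ hne hθ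
    rw [uIoc_of_le (by linarith [pi_pos])] at hθ
    have hcos : 0 < Real.cos θ := cos_pos_of_mem_Ioo ⟨hθ.1, lt_of_le_of_ne hθ.2 hne⟩
    have hΦ0 := (tendsto_of_norm_le_exp_neg_mul_re hT hdecay).comp
      (tendsto_ofReal_add_mul_exp_comap_re δ hcos)
    have hA : Tendsto (fun R : ℝ => (1 + Φ (δ + R * exp (θ * I))) / (1 - Φ (δ + R * exp (θ * I))))
        atTop (𝓝 1) := by
      simpa [Pi.div_def] using (hΦ0.const_add 1).div (hΦ0.const_sub 1) (by simp)
    simpa [mul_assoc] using (tendsto_const_nhds (x := C)).mul hA |>.mul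
      ((tendsto_div_add_add_mul_cobounded b (δ : ℂ)).comp (tendsto_ofReal_mul_exp_cobounded θ))

theorem stmt13_general
    (T : ℝ) (hT : 0 < T)
    (K : ℕ)
    (β : Fin K → ℝ)
    (m : Fin K → ℕ) (hm : ∀ k, 0 < m k)
    (Φ : ℂ → ℂ)
    (hΦ : ∀ s : ℂ, Φ s = ∑ k : Fin K, (β k : ℂ) * Complex.exp (-((m k : ℂ) * (T : ℂ) * s)))
    (hbound : ∀ ω : ℝ, ‖Φ (Complex.I * (ω : ℂ))‖ ≤ 1)
    (ωb ωc L : ℝ)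
    (Γ : ℂ → ℂ)
    (hΓ : ∀ s : ℂ, Γ s = ((ωc : ℂ) * (L : ℂ) / 2) * ((1 + Φ s) / (1 - Φ s))
        * ((ωb : ℂ) / (s + (ωb : ℂ))))
    (δ : ℝ) (hδ : 0 < δ) :
    Tendsto (fun R : ℝ =>
        ∫ θ in (-(π / 2))..(π / 2),
          Γ ((δ : ℂ) + (R : ℂ) * Complex.exp ((θ : ℂ) * Complex.I))
            * ((R : ℂ) * Complex.exp ((θ : ℂ) * Complex.I)))
      atTop (𝓝 ((π * ωb * ωc * L / 2 : ℝ) : ℂ)) := by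
  have hΦd : Differentiable ℂ Φ := funext hΦ ▸ differentiable_expSum _ m T
  have hdecay (z : ℂ) (hz : 0 ≤ z.re) : ‖Φ z‖ ≤ Real.exp (-(T * z.re)) :=
    norm_le_exp_neg_mul_re_of_bounded hΦd
      (fun z hz => hΦ z ▸ norm_exp_mul_expSum_le _ m T hT.le hm hz) hbound hz
  have hlim := tendsto_integral_right_arc hΦd.continuous hT hdecay (ωc * L / 2) ωb hδ
  simp only [hΓ]
  convert hlim using 2
  push_cast
  ring

/-- For fixed `δ > 0`,
`lim_{R→∞} ∫_{−π/2}^{π/2} Γ(δ + R e^{iθ})·R e^{iθ} dθ = π ω_b ω_c L / 2`. -/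
theorem stmt13
    (T : ℝ) (hT : 0 < T)
    (K : ℕ) (hK : 1 ≤ K)
    (β : Fin K → ℝ) (hβ : ∃ k, β k ≠ 0)
    (m : Fin K → ℕ) (hm : ∀ k, 0 < m k) (hm_inj : Function.Injective m)
    (Φ : ℂ → ℂ)
    (hΦ : ∀ s : ℂ, Φ s = ∑ k : Fin K, (β k : ℂ) * Complex.exp (-((m k : ℂ) * (T : ℂ) * s)))
    (hbound : ∀ ω : ℝ, ‖Φ (Complex.I * (ω : ℂ))‖ ≤ 1)
    (ωb ωc L : ℝ) (hωb : 0 < ωb) (hωc : 0 < ωc) (hL : 0 < L)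
    (Γ : ℂ → ℂ)
    (hΓ : ∀ s : ℂ, Γ s = ((ωc : ℂ) * (L : ℂ) / 2) * ((1 + Φ s) / (1 - Φ s))
        * ((ωb : ℂ) / (s + (ωb : ℂ))))
    (δ : ℝ) (hδ : 0 < δ) :
    Tendsto (fun R : ℝ =>
        ∫ θ in (-(π / 2))..(π / 2),
          Γ ((δ : ℂ) + (R : ℂ) * Complex.exp ((θ : ℂ) * Complex.I))
            * ((R : ℂ) * Complex.exp ((θ : ℂ) * Complex.I)))
      atTop (𝓝 ((π * ωb * ωc * L / 2 : ℝ) : ℂ)) :=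
  stmt13_general T hT K β m hm Φ hΦ hbound ωb ωc L Γ hΓ δ hδ
end

section
/- Let T > 0 and let Φ(s) = Σ_{k=1}^K β_k · exp(−m_k·T·s) with real β_k not all zero and distinct positive integers m_k, and assume |Φ(iω)| ≤ 1 for every real ω. Let ω_b, ω_c, L > 0 and Γ(s) = (ω_c·L/2)·((1+Φ(s))/(1−Φ(s)))·(ω_b/(s+ω_b)). Then for every fixed δ > 0, lim_{R→∞} ∫_{−π/2}^{π/2} Log(1 + Γ(δ + R·e^{iθ}))·R·e^{iθ} dθ = π·ω_b·ω_c·L/2, where Log denotes the principal branch of the complex logarithm; in particular, for all sufficiently large R the integrand is well defined for every θ ∈ [−π/2, π/2] (since |Γ| < 1/2 on the arc). -/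
/-!
Write `Φ(s) = P(e^{-Ts})` with `P(z) = ∑ β_k z^{m_k}`. The hypothesis `|Φ(iω)| ≤ 1` says `|P| ≤ 1`
on the unit circle, and since every `m_k ≥ 1` the maximum modulus principle applied to `P(z)/z`
gives the Schwarz-type bound `|Φ(s)| ≤ e^{-T Re s}` on the closed right half-plane. So on
`Re s ≥ δ` the factor `(1 + Φ)/(1 - Φ)` is bounded and tends to `1` as `Re s → ∞`: the product
`|Γ(s)| |s - δ|` is bounded and `Γ(s)(s - δ) → ω_c L ω_b / 2`. On the arc `s = δ + R e^{iθ}` this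
makes `|Γ| = O(1/R)`, so `log (1 + Γ) = Γ + O(|Γ|²)` and dominated convergence gives the limit
`π ω_c L ω_b / 2`.
-/

open Complex Real Filter Set Topology intervalIntegral MeasureTheory
open scoped Interval

theorem norm_sum_mul_pow_le_norm {ι : Type*} [Fintype ι] (c : ι → ℂ) {m : ι → ℕ}
    (hm : ∀ k, 0 < m k) (h : ∀ z : ℂ, ‖z‖ = 1 → ‖∑ k, c k * z ^ m k‖ ≤ 1)
    {z : ℂ} (hz : ‖z‖ ≤ 1) : ‖∑ k, c k * z ^ m k‖ ≤ ‖z‖ := by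
  set g : ℂ → ℂ := fun w => ∑ k, c k * w ^ (m k - 1)
  have hfactor : ∀ w : ℂ, ∑ k, c k * w ^ m k = w * g w := fun w => by
    simp only [g, Finset.mul_sum]
    refine Finset.sum_congr rfl fun k _ => ?_
    conv_lhs => rw [← Nat.sub_add_cancel (hm k), pow_succ]
    ring
  have hg : ‖g z‖ ≤ 1 := by
    refine Complex.norm_le_of_forall_mem_frontier_norm_le Metric.isBounded_ball
      (Differentiable.diffContOnCl (by fun_prop)) (fun w hw => ?_)
      (by rwa [closure_ball _ one_ne_zero, mem_closedBall_zero_iff])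
    rw [frontier_ball _ one_ne_zero, mem_sphere_zero_iff_norm] at hw
    simpa [hfactor, hw] using h w hw
  rw [hfactor, norm_mul]
  exact mul_le_of_le_one_right (norm_nonneg _) hg

theorem norm_sum_mul_exp_le {ι : Type*} [Fintype ι] (c : ι → ℂ) {m : ι → ℕ}
    (hm : ∀ k, 0 < m k) {T : ℝ} (hT : 0 < T)
    (h : ∀ ω : ℝ, ‖∑ k, c k * cexp (-(m k * T * (I * ω)))‖ ≤ 1) {s : ℂ} (hs : 0 ≤ s.re) :
    ‖∑ k, c k * cexp (-(m k * T * s))‖ ≤ Real.exp (-(T * s.re)) := by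
  have hpow : ∀ s : ℂ, ∑ k, c k * cexp (-(m k * T * s)) = ∑ k, c k * cexp (-(T * s)) ^ m k :=
    fun s => Finset.sum_congr rfl fun k _ => by rw [← Complex.exp_nat_mul]; ring_nf
  have hnorm : ‖cexp (-(T * s))‖ = Real.exp (-(T * s.re)) := by
    simp [Complex.norm_exp]
  rw [hpow, ← hnorm]
  refine norm_sum_mul_pow_le_norm c hm (fun z hz => ?_)
    (by rw [hnorm, Real.exp_le_one_iff]; nlinarith)
  -- every point of the unit circle is `exp (-T · iω)` for `ω = -arg z / T`
  have hz' : cexp (-(T * (I * ↑(-arg z / T)))) = z := by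
    have hT' : (T : ℂ) ≠ 0 := by exact_mod_cast hT.ne'
    have hpolar := Complex.norm_mul_exp_arg_mul_I z
    rw [hz, ofReal_one, one_mul] at hpolar
    conv_rhs => rw [← hpolar]
    congr 1
    push_cast
    field_simp
  have := h (-arg z / T)
  rwa [hpow, hz'] at this

theorem tendsto_comap_re_atTop_zero_of_norm_le_exp {Φ : ℂ → ℂ} {T : ℝ} (hT : 0 < T)
    (hΦ : ∀ s : ℂ, 0 ≤ s.re → ‖Φ s‖ ≤ Real.exp (-(T * s.re))) :
    Tendsto Φ (comap re atTop) (𝓝 0) := by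
  have hexp : Tendsto (fun s : ℂ => Real.exp (-(T * s.re))) (comap re atTop) (𝓝 0) :=
    Real.tendsto_exp_neg_atTop_nhds_zero.comp (tendsto_comap.const_mul_atTop hT)
  refine squeeze_zero_norm' ?_ hexp
  filter_upwards [tendsto_comap.eventually (eventually_ge_atTop 0)] with s hs
  exact hΦ s hs

theorem Complex.comap_re_atTop_le_cobounded : comap re atTop ≤ Bornology.cobounded ℂ :=
  tendsto_norm_atTop_iff_cobounded.mp (tendsto_atTop_mono re_le_norm tendsto_comap)

theorem Complex.norm_log_one_add_sub_self_le_sq {z : ℂ} (hz : ‖z‖ ≤ 1 / 2) :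
    ‖log (1 + z) - z‖ ≤ ‖z‖ ^ 2 := by
  refine (norm_log_one_add_sub_self_le (hz.trans_lt one_half_lt_one)).trans ?_
  have : (1 - ‖z‖)⁻¹ ≤ 2 := by
    rw [inv_le_comm₀ (by linarith) two_pos]
    linarith
  nlinarith [sq_nonneg ‖z‖]

theorem tendsto_log_one_add_mul {α : Type*} {l : Filter α} {u w : α → ℂ} {a : ℂ}
    (hu : Tendsto u l (𝓝 0)) (huw : Tendsto (fun x => u x * w x) l (𝓝 a)) :
    Tendsto (fun x => log (1 + u x) * w x) l (𝓝 a) := by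
  have hsmall : ∀ᶠ x in l, ‖u x‖ ≤ 1 / 2 := by
    simpa using hu.norm.eventually (ge_mem_nhds (by norm_num : ‖(0 : ℂ)‖ < 1 / 2))
  have herr : Tendsto (fun x => (log (1 + u x) - u x) * w x) l (𝓝 0) := by
    refine squeeze_zero_norm' (a := fun x => ‖u x‖ * ‖u x * w x‖) ?_
      (by simpa only [norm_zero, zero_mul] using hu.norm.mul huw.norm)
    filter_upwards [hsmall] with x hx
    calc ‖(log (1 + u x) - u x) * w x‖ = ‖log (1 + u x) - u x‖ * ‖w x‖ := norm_mul _ _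
      _ ≤ ‖u x‖ ^ 2 * ‖w x‖ := by gcongr; exact norm_log_one_add_sub_self_le_sq hx
      _ = ‖u x‖ * ‖u x * w x‖ := by rw [norm_mul]; ring
  simpa only [sub_mul, sub_add_cancel, zero_add] using herr.add huw

noncomputable def rightArc (δ R θ : ℝ) : ℂ := δ + R * cexp (θ * I)

theorem rightArc_sub (δ R θ : ℝ) : rightArc δ R θ - δ = R * cexp (θ * I) := by
  simp [rightArc]

theorem rightArc_re (δ R θ : ℝ) : (rightArc δ R θ).re = δ + R * Real.cos θ := by
  simp [rightArc, exp_ofReal_mul_I_re]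

theorem norm_rightArc_sub {R : ℝ} (δ θ : ℝ) (hR : 0 ≤ R) : ‖rightArc δ R θ - δ‖ = R := by
  simp [rightArc_sub, norm_exp_ofReal_mul_I, abs_of_nonneg hR]

theorem le_rightArc_re {R θ : ℝ} (δ : ℝ) (hR : 0 ≤ R) (hθ : θ ∈ Icc (-(π / 2)) (π / 2)) :
    δ ≤ (rightArc δ R θ).re := by
  rw [rightArc_re]
  nlinarith [cos_nonneg_of_mem_Icc hθ]

theorem tendsto_rightArc_comap_re {θ : ℝ} (δ : ℝ) (hθ : 0 < Real.cos θ) :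
    Tendsto (fun R => rightArc δ R θ) atTop (comap re atTop) := by
  simp only [tendsto_comap_iff, Function.comp_def, rightArc_re]
  exact tendsto_atTop_add_const_left _ _ (tendsto_id.atTop_mul_const hθ)

section ArcIntegral

variable {f : ℂ → ℂ} {δ C : ℝ}

theorem tendsto_comap_re_atTop_zero_of_tendsto_mul_sub {a : ℂ}
    (hlim : Tendsto (fun s => f s * (s - δ)) (comap re atTop) (𝓝 a)) :
    Tendsto f (comap re atTop) (𝓝 0) := by
  have hinv : Tendsto (fun s : ℂ => (s - δ)⁻¹) (comap re atTop) (𝓝 0) :=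
    tendsto_inv₀_cobounded.comp
      ((tendsto_sub_const_cobounded _).comp comap_re_atTop_le_cobounded)
  have hprod := hlim.mul hinv
  rw [mul_zero] at hprod
  refine hprod.congr' ?_
  filter_upwards [tendsto_comap.eventually (eventually_gt_atTop δ)] with s hs
  have : s - δ ≠ 0 := fun h => by simp [sub_eq_zero.1 h] at hs
  field_simp

theorem norm_comp_rightArc_le (hbound : ∀ s : ℂ, δ ≤ s.re → ‖f s‖ * ‖s - δ‖ ≤ C)
    {R θ : ℝ} (hR : 0 < R) (hθ : θ ∈ Icc (-(π / 2)) (π / 2)) :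
    ‖f (rightArc δ R θ)‖ ≤ C / R := by
  have := hbound _ (le_rightArc_re δ hR.le hθ)
  rwa [norm_rightArc_sub δ θ hR.le, ← le_div_iff₀ hR] at this

theorem eventually_norm_comp_rightArc_lt (hbound : ∀ s : ℂ, δ ≤ s.re → ‖f s‖ * ‖s - δ‖ ≤ C) :
    ∀ᶠ R in atTop, ∀ θ ∈ Icc (-(π / 2)) (π / 2), ‖f (rightArc δ R θ)‖ < 1 / 2 := by
  filter_upwards [eventually_gt_atTop 0, eventually_gt_atTop (2 * C)] with R hR hRC θ hθ
  calc ‖f (rightArc δ R θ)‖ ≤ C / R := norm_comp_rightArc_le hbound hR hθ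
    _ < 1 / 2 := by rw [div_lt_iff₀ hR]; linarith

theorem continuousOn_log_one_add_comp_rightArc (hcont : ContinuousOn f {s | δ ≤ s.re})
    {R : ℝ} (hR : 0 ≤ R) (hsmall : ∀ θ ∈ Icc (-(π / 2)) (π / 2), ‖f (rightArc δ R θ)‖ < 1) :
    ContinuousOn (fun θ : ℝ => log (1 + f (rightArc δ R θ)) * ((R : ℂ) * cexp (θ * I)))
      (Icc (-(π / 2)) (π / 2)) := by
  have harc : ContinuousOn (fun θ : ℝ => f (rightArc δ R θ)) (Icc (-(π / 2)) (π / 2)) :=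
    hcont.comp (by unfold rightArc; fun_prop) fun θ hθ => le_rightArc_re δ hR hθ
  refine ContinuousOn.mul ?_ (by fun_prop)
  exact (continuousOn_const.add harc).clog fun θ hθ => mem_slitPlane_of_norm_lt_one (hsmall θ hθ)

theorem tendsto_integral_log_one_add_comp_rightArc {a : ℂ}
    (hcont : ContinuousOn f {s | δ ≤ s.re})
    (hbound : ∀ s : ℂ, δ ≤ s.re → ‖f s‖ * ‖s - δ‖ ≤ C)
    (hlim : Tendsto (fun s => f s * (s - δ)) (comap re atTop) (𝓝 a)) :
    Tendsto (fun R : ℝ => ∫ θ in (-(π / 2))..(π / 2),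
        log (1 + f (rightArc δ R θ)) * ((R : ℂ) * cexp (θ * I)))
      atTop (𝓝 (π * a)) := by
  have hpi : -(π / 2) ≤ π / 2 := by linarith [pi_pos]
  have hIoc : Ι (-(π / 2)) (π / 2) ⊆ Icc (-(π / 2)) (π / 2) := by
    rw [uIoc_of_le hpi]; exact Ioc_subset_Icc_self
  have hmeas : ∀ᶠ R : ℝ in atTop, AEStronglyMeasurable
      (fun θ : ℝ => log (1 + f (rightArc δ R θ)) * ((R : ℂ) * cexp (θ * I)))
      (volume.restrict (Ι (-(π / 2)) (π / 2))) := by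
    filter_upwards [eventually_ge_atTop 0, eventually_norm_comp_rightArc_lt hbound]
      with R hR hsmall
    exact ((continuousOn_log_one_add_comp_rightArc hcont hR fun θ hθ =>
      (hsmall θ hθ).trans one_half_lt_one).mono hIoc).aestronglyMeasurable measurableSet_uIoc
  have hbdd : ∀ᶠ R : ℝ in atTop, ∀ᵐ θ : ℝ, θ ∈ Ι (-(π / 2)) (π / 2) →
      ‖log (1 + f (rightArc δ R θ)) * ((R : ℂ) * cexp (θ * I))‖ ≤ 3 / 2 * C := by
    filter_upwards [eventually_gt_atTop 0, eventually_norm_comp_rightArc_lt hbound]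
      with R hR hsmall
    refine ae_of_all _ fun θ hθ => ?_
    rw [norm_mul, ← rightArc_sub, norm_rightArc_sub δ θ hR.le]
    calc ‖log (1 + f (rightArc δ R θ))‖ * R ≤ 3 / 2 * ‖f (rightArc δ R θ)‖ * R := by
          gcongr; exact norm_log_one_add_half_le_self (hsmall θ (hIoc hθ)).le
      _ ≤ 3 / 2 * (C / R) * R := by gcongr; exact norm_comp_rightArc_le hbound hR (hIoc hθ)
      _ = 3 / 2 * C := by field_simp
  have hpoint : ∀ᵐ θ : ℝ, θ ∈ Ι (-(π / 2)) (π / 2) →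
      Tendsto (fun R : ℝ => log (1 + f (rightArc δ R θ)) * ((R : ℂ) * cexp (θ * I)))
        atTop (𝓝 a) := by
    filter_upwards [measure_eq_zero_iff_ae_notMem.1 (Real.volume_singleton (a := π / 2))]
      with θ hθ hθI
    rw [uIoc_of_le hpi] at hθI
    have hcos : 0 < Real.cos θ := cos_pos_of_mem_Ioo ⟨hθI.1, lt_of_le_of_ne hθI.2 hθ⟩
    have := (tendsto_log_one_add_mul (tendsto_comap_re_atTop_zero_of_tendsto_mul_sub hlim)
      hlim).comp (tendsto_rightArc_comap_re δ hcos)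
    simpa only [Function.comp_def, rightArc_sub] using this
  simpa [intervalIntegral.integral_const] using
    tendsto_integral_filter_of_dominated_convergence _ hmeas hbdd intervalIntegrable_const hpoint

end ArcIntegral

theorem Complex.norm_sub_ofReal_le_norm_add_ofReal {s : ℂ} {δ b : ℝ} (hδb : 0 ≤ δ + b)
    (hs : δ ≤ s.re) : ‖s - δ‖ ≤ ‖s + b‖ := by
  rw [← sq_le_sq₀ (norm_nonneg _) (norm_nonneg _), Complex.sq_norm, Complex.sq_norm, normSq_apply,
    normSq_apply]
  simp only [sub_re, add_re, sub_im, add_im, ofReal_re, ofReal_im, sub_zero, add_zero]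
  nlinarith

-- The paper's `Γ`, with gain `c = ω_c L / 2` and low-pass cutoff `b = ω_b`.
noncomputable def qdobOpenLoop (Φ : ℂ → ℂ) (c : ℂ) (b : ℝ) (s : ℂ) : ℂ :=
  c * ((1 + Φ s) / (1 - Φ s)) * (b / (s + b))

section QdobOpenLoop

variable {Φ : ℂ → ℂ} {c : ℂ} {b δ : ℝ}

theorem norm_qdobOpenLoop_mul_le {q : ℝ} {s : ℂ} (hΦ : ‖Φ s‖ ≤ q) (hq : q < 1)
    (hδb : 0 ≤ δ + b) (hs : δ ≤ s.re) :
    ‖qdobOpenLoop Φ c b s‖ * ‖s - δ‖ ≤ ‖c‖ * ((1 + q) / (1 - q)) * |b| := by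
  have hnum : ‖1 + Φ s‖ ≤ 1 + q := (norm_add_le _ _).trans (by rw [norm_one]; linarith)
  have hden : 1 - q ≤ ‖1 - Φ s‖ := by
    have := norm_sub_norm_le (1 : ℂ) (Φ s)
    rw [norm_one] at this
    linarith
  have hratio : ‖s - δ‖ / ‖s + b‖ ≤ 1 :=
    div_le_one_of_le₀ (norm_sub_ofReal_le_norm_add_ofReal hδb hs) (norm_nonneg _)
  calc ‖qdobOpenLoop Φ c b s‖ * ‖s - δ‖
      = ‖c‖ * (‖1 + Φ s‖ / ‖1 - Φ s‖) * |b| * (‖s - δ‖ / ‖s + b‖) := by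
        simp only [qdobOpenLoop, norm_mul, norm_div, norm_real, Real.norm_eq_abs]
        ring
    _ ≤ ‖c‖ * ((1 + q) / (1 - q)) * |b| * 1 := by
        have hq0 : 0 ≤ q := (norm_nonneg _).trans hΦ
        have : 0 ≤ (1 + q) / (1 - q) := div_nonneg (by linarith) (by linarith)
        gcongr ‖c‖ * ?_ * |b| * ?_
        exact div_le_div₀ (by linarith) hnum (by linarith) hden
    _ = ‖c‖ * ((1 + q) / (1 - q)) * |b| := mul_one _

theorem continuousOn_qdobOpenLoop (hΦc : ContinuousOn Φ {s | δ ≤ s.re})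
    (hΦ1 : ∀ s : ℂ, δ ≤ s.re → Φ s ≠ 1) (hδb : 0 < δ + b) :
    ContinuousOn (qdobOpenLoop Φ c b) {s | δ ≤ s.re} := by
  refine (continuousOn_const.mul ((continuousOn_const.add hΦc).div
    (continuousOn_const.sub hΦc) fun s hs => sub_ne_zero.2 (hΦ1 s hs).symm)).mul
    (continuousOn_const.div (by fun_prop) fun s hs h => ?_)
  have := congrArg re h
  simp only [add_re, ofReal_re, zero_re] at this
  linarith [hs.out]

theorem tendsto_qdobOpenLoop_mul_sub (hΦ : Tendsto Φ (comap re atTop) (𝓝 0)) (δ : ℝ) :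
    Tendsto (fun s => qdobOpenLoop Φ c b s * (s - δ)) (comap re atTop) (𝓝 (c * b)) := by
  have hgain : Tendsto (fun s => (1 + Φ s) / (1 - Φ s)) (comap re atTop) (𝓝 1) := by
    simpa [Pi.div_def] using ((tendsto_const_nhds (x := (1 : ℂ))).add hΦ).div
      ((tendsto_const_nhds (x := (1 : ℂ))).sub hΦ) (by norm_num)
  have hinv : Tendsto (fun s : ℂ => (s + b)⁻¹) (comap re atTop) (𝓝 0) :=
    tendsto_inv₀_cobounded.comp
      ((tendsto_add_const_cobounded _).comp comap_re_atTop_le_cobounded)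
  have hlag : Tendsto (fun s : ℂ => (b : ℂ) * (1 - (δ + b) * (s + b)⁻¹)) (comap re atTop)
      (𝓝 b) := by
    simpa using (tendsto_const_nhds (x := (b : ℂ))).mul ((tendsto_const_nhds (x := (1 : ℂ))).sub
      ((tendsto_const_nhds (x := (δ : ℂ) + b)).mul hinv))
  have hprod := (tendsto_const_nhds (x := c)).mul (hgain.mul hlag)
  rw [one_mul] at hprod
  refine hprod.congr' ?_
  filter_upwards [tendsto_comap.eventually (eventually_gt_atTop (-b))] with s hs
  have : s + b ≠ 0 := fun h => by
    have := congrArg re h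
    simp only [add_re, ofReal_re, zero_re] at this
    linarith
  simp only [qdobOpenLoop]
  field_simp
  ring

end QdobOpenLoop

theorem stmt14_general
    (T : ℝ) (hT : 0 < T)
    (K : ℕ)
    (β : Fin K → ℝ)
    (m : Fin K → ℕ) (hm : ∀ k, 0 < m k)
    (Φ : ℂ → ℂ)
    (hΦ : ∀ s : ℂ, Φ s = ∑ k : Fin K, (β k : ℂ) * Complex.exp (-((m k : ℂ) * (T : ℂ) * s)))
    (hbound : ∀ ω : ℝ, ‖Φ (Complex.I * (ω : ℂ))‖ ≤ 1)
    (ωb ωc L : ℝ) (hωb : 0 < ωb)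
    (Γ : ℂ → ℂ)
    (hΓ : ∀ s : ℂ, Γ s = ((ωc : ℂ) * (L : ℂ) / 2) * ((1 + Φ s) / (1 - Φ s))
        * ((ωb : ℂ) / (s + (ωb : ℂ))))
    (δ : ℝ) (hδ : 0 < δ) :
    (∀ᶠ R : ℝ in atTop, ∀ θ ∈ Set.Icc (-(π / 2)) (π / 2),
      ‖Γ ((δ : ℂ) + (R : ℂ) * Complex.exp ((θ : ℂ) * Complex.I))‖ < 1 / 2) ∧
    Tendsto (fun R : ℝ =>
        ∫ θ in (-(π / 2))..(π / 2),
          Complex.log (1 + Γ ((δ : ℂ) + (R : ℂ) * Complex.exp ((θ : ℂ) * Complex.I)))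
            * ((R : ℂ) * Complex.exp ((θ : ℂ) * Complex.I)))
      atTop (𝓝 ((π * ωb * ωc * L / 2 : ℝ) : ℂ)) := by
  have hdecay (s : ℂ) (hs : 0 ≤ s.re) : ‖Φ s‖ ≤ Real.exp (-(T * s.re)) := by
    simpa only [← hΦ] using norm_sum_mul_exp_le (fun k => (β k : ℂ)) hm hT
      (fun ω => by simpa only [← hΦ] using hbound ω) hs
  set q := Real.exp (-(T * δ))
  have hq : q < 1 := Real.exp_lt_one_iff.2 (by nlinarith)
  have hΦq (s : ℂ) (hs : δ ≤ s.re) : ‖Φ s‖ ≤ q :=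
    (hdecay s (hδ.le.trans hs)).trans (Real.exp_le_exp.2 (by nlinarith))
  have hΦc : Continuous Φ := by
    rw [funext hΦ]
    fun_prop
  obtain rfl : Γ = qdobOpenLoop Φ ((ωc : ℂ) * L / 2) ωb := funext hΓ
  have hloop (s : ℂ) (hs : δ ≤ s.re) :=
    norm_qdobOpenLoop_mul_le (c := (ωc : ℂ) * L / 2) (b := ωb) (hΦq s hs) hq (by linarith) hs
  refine ⟨eventually_norm_comp_rightArc_lt hloop, ?_⟩
  have hΦ1 (s : ℂ) (hs : δ ≤ s.re) : Φ s ≠ 1 := fun h => by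
    simpa [h] using (hΦq s hs).trans_lt hq
  rw [show ((π * ωb * ωc * L / 2 : ℝ) : ℂ) = π * ((ωc : ℂ) * L / 2 * ωb) by push_cast; ring]
  exact tendsto_integral_log_one_add_comp_rightArc
    (continuousOn_qdobOpenLoop hΦc.continuousOn hΦ1 (by linarith)) hloop
    (tendsto_qdobOpenLoop_mul_sub (tendsto_comap_re_atTop_zero_of_norm_le_exp hT hdecay) δ)

/-- For fixed `δ > 0`,
`lim_{R→∞} ∫_{−π/2}^{π/2} Log(1 + Γ(δ + R e^{iθ}))·R e^{iθ} dθ = π ω_b ω_c L / 2`,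
with `Log` the principal branch; in particular, for all sufficiently large `R`,
`|Γ| < 1/2` on the arc. -/
theorem stmt14
    (T : ℝ) (hT : 0 < T)
    (K : ℕ) (hK : 1 ≤ K)
    (β : Fin K → ℝ) (hβ : ∃ k, β k ≠ 0)
    (m : Fin K → ℕ) (hm : ∀ k, 0 < m k) (hm_inj : Function.Injective m)
    (Φ : ℂ → ℂ)
    (hΦ : ∀ s : ℂ, Φ s = ∑ k : Fin K, (β k : ℂ) * Complex.exp (-((m k : ℂ) * (T : ℂ) * s)))
    (hbound : ∀ ω : ℝ, ‖Φ (Complex.I * (ω : ℂ))‖ ≤ 1)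
    (ωb ωc L : ℝ) (hωb : 0 < ωb) (hωc : 0 < ωc) (hL : 0 < L)
    (Γ : ℂ → ℂ)
    (hΓ : ∀ s : ℂ, Γ s = ((ωc : ℂ) * (L : ℂ) / 2) * ((1 + Φ s) / (1 - Φ s))
        * ((ωb : ℂ) / (s + (ωb : ℂ))))
    (δ : ℝ) (hδ : 0 < δ) :
    (∀ᶠ R : ℝ in atTop, ∀ θ ∈ Set.Icc (-(π / 2)) (π / 2),
      ‖Γ ((δ : ℂ) + (R : ℂ) * Complex.exp ((θ : ℂ) * Complex.I))‖ < 1 / 2) ∧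
    Tendsto (fun R : ℝ =>
        ∫ θ in (-(π / 2))..(π / 2),
          Complex.log (1 + Γ ((δ : ℂ) + (R : ℂ) * Complex.exp ((θ : ℂ) * Complex.I)))
            * ((R : ℂ) * Complex.exp ((θ : ℂ) * Complex.I)))
      atTop (𝓝 ((π * ωb * ωc * L / 2 : ℝ) : ℂ)) :=
  stmt14_general T hT K β m hm Φ hΦ hbound ωb ωc L hωb Γ hΓ δ hδ
end
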